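/- arXiv:2105.08344 — 6 statements merged into one kernel-verified Lean document; each statement's English description precedes it below -/
import Mathlib

section
/- The set of bounded directions B(U) := {ξ ∈ S^{N-1} : liminf_{τ→+∞} dist(τξ, U)/τ > 0} is an open subset of the unit sphere S^{N-1}. -/
open Filter Metric Topology

/-!
For τ > 0 the map `x ↦ infDist (τ • x) U / τ` is 1-Lipschitz, since `infDist` is 1-Lipschitz and
scaling by τ multiplies distances by τ. For fixed `x` these values stay in `[0, infDist 0 U + ‖x‖]`
once τ ≥ 1, so the liminf is a genuine one (not a junk value) and inherits the Lipschitz bound.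
The bounded directions are thus the points of the sphere where a continuous function is positive.
-/

section

variable {E : Type*} [NormedAddCommGroup E] [NormedSpace ℝ E]

noncomputable def distGrowthRate (U : Set E) (x : E) : ℝ :=
  liminf (fun τ : ℝ => infDist (τ • x) U / τ) atTop

theorem infDist_smul_div_le_add_dist (U : Set E) (x y : E) {τ : ℝ} (hτ : 0 < τ) :
    infDist (τ • x) U / τ ≤ infDist (τ • y) U / τ + dist x y := by
  rw [div_add' _ _ _ hτ.ne', div_le_div_iff_of_pos_right hτ]
  calc infDist (τ • x) U ≤ infDist (τ • y) U + dist (τ • x) (τ • y) :=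
        infDist_le_infDist_add_dist
    _ = infDist (τ • y) U + dist x y * τ := by
        rw [dist_smul₀, Real.norm_of_nonneg hτ.le, mul_comm]

theorem isBoundedUnder_ge_infDist_smul_div (U : Set E) (x : E) :
    IsBoundedUnder (· ≥ ·) atTop (fun τ : ℝ => infDist (τ • x) U / τ) :=
  isBoundedUnder_of_eventually_ge <| (eventually_gt_atTop 0).mono fun _ hτ =>
    div_nonneg infDist_nonneg hτ.le

theorem isBoundedUnder_le_infDist_smul_div (U : Set E) (x : E) :
    IsBoundedUnder (· ≤ ·) atTop (fun τ : ℝ => infDist (τ • x) U / τ) := by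
  refine isBoundedUnder_of_eventually_le (a := infDist 0 U + ‖x‖) ?_
  filter_upwards [eventually_ge_atTop 1] with τ hτ
  calc infDist (τ • x) U / τ ≤ infDist (τ • (0 : E)) U / τ + dist x 0 :=
        infDist_smul_div_le_add_dist U x 0 (by linarith)
    _ ≤ infDist 0 U + ‖x‖ := by
        rw [smul_zero, dist_zero_right]
        gcongr
        exact div_le_self infDist_nonneg hτ

theorem distGrowthRate_le_add_dist (U : Set E) (x y : E) :
    distGrowthRate U x ≤ distGrowthRate U y + dist x y := by
  have hy_below := isBoundedUnder_ge_infDist_smul_div U y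
  have hy_above := isBoundedUnder_le_infDist_smul_div U y
  rw [distGrowthRate, distGrowthRate,
    ← liminf_add_const atTop _ _ hy_above.isCoboundedUnder_flip hy_below]
  refine liminf_le_liminf ?_ (isBoundedUnder_ge_infDist_smul_div U x)
    (isBoundedUnder_le_add hy_above (isBoundedUnder_const (a := dist x y))).isCoboundedUnder_flip
  exact (eventually_gt_atTop 0).mono fun τ hτ => infDist_smul_div_le_add_dist U x y hτ

theorem continuous_distGrowthRate (U : Set E) : Continuous (distGrowthRate U) :=
  (LipschitzWith.of_le_add (distGrowthRate_le_add_dist U)).continuous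

theorem isOpen_setOf_distGrowthRate_pos (U : Set E) : IsOpen {x | 0 < distGrowthRate U x} :=
  isOpen_lt continuous_const (continuous_distGrowthRate U)

end

theorem boundedDirections_isOpen_general (N : ℕ)
    (U : Set (EuclideanSpace ℝ (Fin N))) :
    IsOpen {ξ : Metric.sphere (0 : EuclideanSpace ℝ (Fin N)) 1 |
      0 < Filter.liminf
        (fun τ : ℝ => Metric.infDist (τ • (ξ : EuclideanSpace ℝ (Fin N))) U / τ)
        Filter.atTop} :=
  (isOpen_setOf_distGrowthRate_pos U).preimage continuous_subtype_val

/-- The set of bounded directions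
`B(U) = {ξ ∈ S^{N-1} : liminf_{τ→+∞} dist(τξ, U)/τ > 0}` is an open subset of the
unit sphere `S^{N-1}`. -/
theorem boundedDirections_isOpen (N : ℕ) (hN : 1 ≤ N)
    (U : Set (EuclideanSpace ℝ (Fin N))) (hU : U.Nonempty) :
    IsOpen {ξ : Metric.sphere (0 : EuclideanSpace ℝ (Fin N)) 1 |
      0 < Filter.liminf
        (fun τ : ℝ => Metric.infDist (τ • (ξ : EuclideanSpace ℝ (Fin N))) U / τ)
        Filter.atTop} :=
  boundedDirections_isOpen_general N U
end

section
/- Let w : S^{N-1} → [c*, +∞] be defined by w(e) = sup{ c*/√(1 − (ξ·e)²) : ξ ∈ U(U), ξ·e ≥ 0 }, with w(e) = c* if no ξ ∈ U(U) satisfies ξ·e ≥ 0 and w(e) = +∞ if e ∈ U(U). Then the envelope set W := { r e : e ∈ S^{N-1}, 0 ≤ r < w(e) } equals ℝ⁺·U(U) + B_{c*} (with the convention ℝ⁺·∅ + B_{c*} = B_{c*}). -/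
/-!
For unit vectors `e`, `ξ` with `t = ⟪ξ, e⟫` one has
`‖r • e - τ • ξ‖ ^ 2 = r ^ 2 * (1 - t ^ 2) + (τ - r * t) ^ 2`, so for `r ≥ 0` the open ray
`ℝ⁺ • ξ` meets `ball (r • e) c*` iff `r < c*`, or `t ≥ 0` and `r ^ 2 * (1 - t ^ 2) < c* ^ 2`,
i.e. `r < c* / √(1 - t ^ 2)`. Hence `r < w(e)` says exactly that `r • e` lies within `c*` of `0`
or of a ray `ℝ⁺ • ξ` with `ξ ∈ U(U)`, and every point is of the form `r • e`.
-/

open Filter Metric Topology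
open scoped Classical Pointwise

/-- The set of unbounded directions `U(U)` of a set `U ⊆ ℝ^N`. -/
def unbDirs (N : ℕ) (U : Set (EuclideanSpace ℝ (Fin N))) :
    Set (EuclideanSpace ℝ (Fin N)) :=
  {ξ | ‖ξ‖ = 1 ∧
    Filter.Tendsto (fun τ : ℝ => Metric.infDist (τ • ξ) U / τ) Filter.atTop (nhds 0)}

/-- The spreading speed `w(e) = sup{c*/√(1-(ξ·e)²) : ξ ∈ U(U), ξ·e ≥ 0}`, with the
conventions `w(e) = c*` if no `ξ ∈ U(U)` satisfies `ξ·e ≥ 0`, and `w(e) = +∞` if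
`e ∈ U(U)`. -/
noncomputable def wspeed (N : ℕ) (cs : ℝ) (U : Set (EuclideanSpace ℝ (Fin N)))
    (e : EuclideanSpace ℝ (Fin N)) : EReal :=
  if e ∈ unbDirs N U then ⊤
  else if ∃ ξ ∈ unbDirs N U, 0 ≤ (inner ℝ ξ e : ℝ) then
    sSup {x : EReal | ∃ ξ ∈ unbDirs N U, 0 ≤ (inner ℝ ξ e : ℝ) ∧
      x = ((cs / Real.sqrt (1 - (inner ℝ ξ e : ℝ) ^ 2) : ℝ) : EReal)}
  else (cs : EReal)

open scoped InnerProductSpace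

section NormedSpace

variable {E : Type*} [SeminormedAddCommGroup E] [NormedSpace ℝ E]

theorem exists_pos_norm_sub_smul_lt {x : E} {c : ℝ} (hx : ‖x‖ < c) (v : E) :
    ∃ τ : ℝ, 0 < τ ∧ ‖x - τ • v‖ < c := by
  have hlim : Tendsto (fun τ : ℝ => ‖x - τ • v‖) (𝓝[>] 0) (𝓝 ‖x‖) := by
    have hcont : Continuous fun τ : ℝ => ‖x - τ • v‖ := by fun_prop
    simpa using (hcont.tendsto 0).mono_left nhdsWithin_le_nhds
  exact (eventually_mem_nhdsWithin.and (hlim.eventually (gt_mem_nhds hx))).exists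

theorem ite_nonempty_cone_add_ball_eq (D : Set E) (c : ℝ) :
    (if D.Nonempty then {y : E | ∃ τ : ℝ, 0 < τ ∧ ∃ ξ ∈ D, y = τ • ξ} + ball 0 c
      else ball 0 c) = {x | ‖x‖ < c ∨ ∃ ξ ∈ D, ∃ τ : ℝ, 0 < τ ∧ ‖x - τ • ξ‖ < c} := by
  split_ifs with hD
  · ext x
    have hcone : (∃ ξ ∈ D, ∃ τ : ℝ, 0 < τ ∧ ‖x - τ • ξ‖ < c) ↔
        x ∈ {y : E | ∃ τ : ℝ, 0 < τ ∧ ∃ ξ ∈ D, y = τ • ξ} + ball 0 c := by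
      simp only [Set.mem_add, mem_ball_zero_iff, Set.mem_ofPred_eq]
      constructor
      · rintro ⟨ξ, hξ, τ, hτ, hx⟩
        exact ⟨τ • ξ, ⟨τ, hτ, ξ, hξ, rfl⟩, x - τ • ξ, hx, add_sub_cancel _ _⟩
      · rintro ⟨_, ⟨τ, hτ, ξ, hξ, rfl⟩, b, hb, rfl⟩
        exact ⟨ξ, hξ, τ, hτ, by rwa [add_sub_cancel_left]⟩
    obtain ⟨ξ, hξ⟩ := hD
    rw [← hcone, Set.mem_ofPred_eq, or_iff_right_of_imp]
    exact fun hx => ⟨ξ, hξ, exists_pos_norm_sub_smul_lt hx ξ⟩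
  · ext x
    simp [Set.not_nonempty_iff_eq_empty.mp hD]

end NormedSpace

theorem exists_norm_eq_one_smul {F : Type*} [NormedAddCommGroup F] [NormedSpace ℝ F]
    [Nontrivial F] (x : F) : ∃ e : F, ‖e‖ = 1 ∧ ∃ r : ℝ, 0 ≤ r ∧ x = r • e := by
  rcases eq_or_ne x 0 with rfl | hx
  · obtain ⟨e, he⟩ := exists_norm_eq F zero_le_one
    exact ⟨e, he, 0, le_rfl, (zero_smul ℝ e).symm⟩
  · refine ⟨‖x‖⁻¹ • x, norm_smul_inv_norm hx, ‖x‖, norm_nonneg x, ?_⟩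
    rw [smul_inv_smul₀ (norm_ne_zero_iff.mpr hx)]

section InnerProductSpace

variable {E : Type*} [NormedAddCommGroup E] [InnerProductSpace ℝ E] {e ξ : E}

theorem norm_smul_sub_smul_sq (he : ‖e‖ = 1) (hξ : ‖ξ‖ = 1) (r τ : ℝ) :
    ‖r • e - τ • ξ‖ ^ 2 = r ^ 2 * (1 - ⟪ξ, e⟫_ℝ ^ 2) + (τ - r * ⟪ξ, e⟫_ℝ) ^ 2 := by
  rw [norm_sub_sq_real, real_inner_smul_left, real_inner_smul_right, real_inner_comm,
    norm_smul, norm_smul, he, hξ, Real.norm_eq_abs, Real.norm_eq_abs, mul_pow, mul_pow, sq_abs,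
    sq_abs]
  ring

theorem exists_pos_norm_smul_sub_smul_lt_iff (he : ‖e‖ = 1) (hξ : ‖ξ‖ = 1) {r c : ℝ}
    (hr : 0 ≤ r) (hc : 0 < c) :
    (∃ τ : ℝ, 0 < τ ∧ ‖r • e - τ • ξ‖ < c) ↔
      r < c ∨ 0 ≤ ⟪ξ, e⟫_ℝ ∧ r ^ 2 * (1 - ⟪ξ, e⟫_ℝ ^ 2) < c ^ 2 := by
  have hsq (τ : ℝ) : ‖r • e - τ • ξ‖ < c ↔
      r ^ 2 * (1 - ⟪ξ, e⟫_ℝ ^ 2) + (τ - r * ⟪ξ, e⟫_ℝ) ^ 2 < c ^ 2 := by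
    rw [← norm_smul_sub_smul_sq he hξ, pow_lt_pow_iff_left₀ (norm_nonneg _) hc.le two_ne_zero]
  have hnorm : ‖r • e‖ = r := by rw [norm_smul, he, mul_one, Real.norm_of_nonneg hr]
  constructor
  · rintro ⟨τ, hτ, hlt⟩
    rw [hsq] at hlt
    refine or_iff_not_imp_left.mpr fun hrc => ?_
    have hcr : c ^ 2 ≤ r ^ 2 := pow_le_pow_left₀ hc.le (not_lt.mp hrc) 2
    -- `c ≤ r` forces `(τ - r * t) ^ 2 < (r * t) ^ 2`, hence `r * t > τ / 2 > 0`
    have hrt : 0 < r * ⟪ξ, e⟫_ℝ := by nlinarith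
    exact ⟨(pos_of_mul_pos_right hrt hr).le, by nlinarith [sq_nonneg (τ - r * ⟪ξ, e⟫_ℝ)]⟩
  · intro h
    by_cases hrc : r < c
    · exact exists_pos_norm_sub_smul_lt (by rwa [hnorm]) ξ
    obtain ⟨ht, hlt⟩ := h.resolve_left hrc
    have hcr : c ^ 2 ≤ r ^ 2 := pow_le_pow_left₀ hc.le (not_lt.mp hrc) 2
    have hrt : 0 < r * ⟪ξ, e⟫_ℝ := by
      refine mul_pos (hc.trans_le (not_lt.mp hrc)) (ht.lt_of_ne ?_)
      rintro ht0
      rw [← ht0] at hlt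
      linarith
    exact ⟨r * ⟪ξ, e⟫_ℝ, hrt, (hsq _).2 (by simpa using hlt)⟩

end InnerProductSpace

theorem lt_div_sqrt_one_sub_sq_iff {r c t : ℝ} (hr : 0 ≤ r) (hc : 0 < c) (ht : t ^ 2 < 1) :
    r < c / √(1 - t ^ 2) ↔ r ^ 2 * (1 - t ^ 2) < c ^ 2 := by
  have hpos : 0 < 1 - t ^ 2 := sub_pos.mpr ht
  rw [lt_div_iff₀ (Real.sqrt_pos.mpr hpos),
    ← pow_lt_pow_iff_left₀ (by positivity) hc.le two_ne_zero, mul_pow, Real.sq_sqrt hpos.le]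

section wspeed

variable {N : ℕ} {cs : ℝ} {U : Set (EuclideanSpace ℝ (Fin N))} {e : EuclideanSpace ℝ (Fin N)}
  {r : ℝ}

theorem lt_wspeed_iff (hcs : 0 < cs) (he : ‖e‖ = 1) (hr : 0 ≤ r) :
    (r : EReal) < wspeed N cs U e ↔
      r < cs ∨ ∃ ξ ∈ unbDirs N U, 0 ≤ ⟪ξ, e⟫_ℝ ∧ r ^ 2 * (1 - ⟪ξ, e⟫_ℝ ^ 2) < cs ^ 2 := by
  unfold wspeed
  split_ifs with heU hacute
  · have hee : ⟪e, e⟫_ℝ = 1 := by rw [real_inner_self_eq_norm_sq, he, one_pow]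
    simp only [EReal.coe_lt_top, true_iff]
    exact Or.inr ⟨e, heU, hee ▸ zero_le_one, by
      rw [hee, one_pow, sub_self, mul_zero]
      exact pow_pos hcs 2⟩
  · have hsup (ξ) (hξ : ξ ∈ unbDirs N U) (ht : 0 ≤ ⟪ξ, e⟫_ℝ) :
        (r : EReal) < ((cs / √(1 - ⟪ξ, e⟫_ℝ ^ 2) : ℝ) : EReal) ↔
          r ^ 2 * (1 - ⟪ξ, e⟫_ℝ ^ 2) < cs ^ 2 := by
      have ht1 := (inner_lt_one_iff_real_of_norm_eq_one hξ.1 he).mpr (ne_of_mem_of_not_mem hξ heU)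
      rw [EReal.coe_lt_coe_iff, lt_div_sqrt_one_sub_sq_iff hr hcs (pow_lt_one₀ ht ht1 two_ne_zero)]
    rw [lt_sSup_iff]
    constructor
    · rintro ⟨_, ⟨ξ, hξ, ht, rfl⟩, hlt⟩
      exact Or.inr ⟨ξ, hξ, ht, (hsup ξ hξ ht).mp hlt⟩
    · rintro (hrc | ⟨ξ, hξ, ht, hlt⟩)
      · obtain ⟨ξ, hξ, ht⟩ := hacute
        refine ⟨_, ⟨ξ, hξ, ht, rfl⟩, (hsup ξ hξ ht).mpr ?_⟩
        nlinarith [sq_nonneg ⟪ξ, e⟫_ℝ]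
      · exact ⟨_, ⟨ξ, hξ, ht, rfl⟩, (hsup ξ hξ ht).mpr hlt⟩
  · simp only [not_exists, not_and, not_le] at hacute
    rw [EReal.coe_lt_coe_iff, iff_self_or]
    rintro ⟨ξ, hξ, ht, -⟩
    exact absurd ht (hacute ξ hξ).not_ge

theorem lt_wspeed_iff_exists_pos_norm_sub_lt (hcs : 0 < cs) (he : ‖e‖ = 1) (hr : 0 ≤ r) :
    (r : EReal) < wspeed N cs U e ↔
      ‖r • e‖ < cs ∨ ∃ ξ ∈ unbDirs N U, ∃ τ : ℝ, 0 < τ ∧ ‖r • e - τ • ξ‖ < cs := by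
  have hnorm : ‖r • e‖ = r := by rw [norm_smul, he, mul_one, Real.norm_of_nonneg hr]
  rw [lt_wspeed_iff hcs he hr, hnorm]
  constructor
  · rintro (hrc | ⟨ξ, hξ, hlt⟩)
    · exact Or.inl hrc
    · exact Or.inr ⟨ξ, hξ, (exists_pos_norm_smul_sub_smul_lt_iff he hξ.1 hr hcs).mpr (Or.inr hlt)⟩
  · rintro (hrc | ⟨ξ, hξ, hτ⟩)
    · exact Or.inl hrc
    · exact ((exists_pos_norm_smul_sub_smul_lt_iff he hξ.1 hr hcs).mp hτ).imp_right
        fun hlt => ⟨ξ, hξ, hlt⟩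

end wspeed

/-- the envelope set `W = {re : e ∈ S^{N-1}, 0 ≤ r < w(e)}` equals
`ℝ⁺·U(U) + B_{c*}` (Minkowski sum), with the convention `ℝ⁺·∅ + B_{c*} = B_{c*}`. -/
theorem envelope_eq_cone_add_ball (N : ℕ) (hN : 1 ≤ N) (cs : ℝ) (hcs : 0 < cs)
    (U : Set (EuclideanSpace ℝ (Fin N))) :
    {x : EuclideanSpace ℝ (Fin N) | ∃ e : EuclideanSpace ℝ (Fin N), ‖e‖ = 1 ∧
        ∃ r : ℝ, 0 ≤ r ∧ (r : EReal) < wspeed N cs U e ∧ x = r • e}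
      = if (unbDirs N U).Nonempty then
          {y : EuclideanSpace ℝ (Fin N) | ∃ τ : ℝ, 0 < τ ∧ ∃ ξ ∈ unbDirs N U, y = τ • ξ}
            + Metric.ball (0 : EuclideanSpace ℝ (Fin N)) cs
        else Metric.ball (0 : EuclideanSpace ℝ (Fin N)) cs := by
  have : Nonempty (Fin N) := ⟨⟨0, hN⟩⟩
  rw [ite_nonempty_cone_add_ball_eq]
  ext x
  constructor
  · rintro ⟨e, he, r, hr, hlt, rfl⟩
    exact (lt_wspeed_iff_exists_pos_norm_sub_lt hcs he hr).mp hlt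
  · intro hx
    obtain ⟨e, he, r, hr, rfl⟩ := exists_norm_eq_one_smul x
    exact ⟨e, he, r, hr, (lt_wspeed_iff_exists_pos_norm_sub_lt hcs he hr).mpr hx, rfl⟩
end

section
/- Let U ⊆ ℝ^N with U(U) ≠ ∅, and let w(e) be defined by w(e) = sup{ c*/√(1 − (ξ·e)²) : ξ ∈ U(U), ξ·e ≥ 0 } with the conventions w(e) = c* if no such ξ exists and w(e) = +∞ if e ∈ U(U). Then for every e ∈ S^{N-1}, w(e) = c* / dist(e, ℝ⁺·U(U)), with the convention c*/0 = +∞. In particular the map e ↦ w(e) ∈ [c*, +∞] is continuous on S^{N-1}. -/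
/-!
The set `U(U)` is compact: it lies in the unit sphere, and it is closed because
`ξ ↦ dist(τξ, U)/τ` is 1-Lipschitz for every `τ > 0`. Fix a unit vector `e` and let `ξ₀`
maximize `(ξ·e)⁺` over `U(U)`, with maximum `s`. Since `|e - τξ|² = 1 - 2τ ξ·e + τ²`, the
distance from `e` to the open ray `ℝ⁺ξ` is `√(1 - (ξ·e)⁺²)`, so `dist(e, ℝ⁺·U(U)) = √(1 - s²)`.
The supremum defining `w(e)` is attained at the maximizer, giving `w(e) = c*/√(1 - s²)`, and
`s = 1` exactly when `e ∈ U(U)`. Continuity follows since `dist(·, ℝ⁺·U(U))` is continuous and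
`d ↦ c*/d` is continuous from `[0, ∞)` to `[0, +∞]` with `c*/0 = +∞`.
-/

open Filter Metric Topology
open scoped Classical

/-- The open positive cone `ℝ⁺·U(U)` generated by the unbounded directions. -/
def posCone (N : ℕ) (U : Set (EuclideanSpace ℝ (Fin N))) :
    Set (EuclideanSpace ℝ (Fin N)) :=
  {x | ∃ τ : ℝ, 0 < τ ∧ ∃ ξ ∈ unbDirs N U, x = τ • ξ}

open scoped RealInnerProductSpace Pointwise ENNReal

lemma isClosed_setOf_tendsto_infDist_smul_div {E : Type*} [NormedAddCommGroup E]
    [NormedSpace ℝ E] (U : Set E) :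
    IsClosed {ξ : E | Tendsto (fun τ : ℝ => infDist (τ • ξ) U / τ) atTop (𝓝 0)} := by
  refine isClosed_of_closure_subset fun ξ hξ =>
    tendsto_order.2 ⟨fun a ha => ?_, fun a ha => ?_⟩
  · filter_upwards [eventually_gt_atTop 0] with τ hτ
    exact ha.trans_le (div_nonneg infDist_nonneg hτ.le)
  · obtain ⟨η, hη, hξη⟩ := Metric.mem_closure_iff.1 hξ (a / 2) (by positivity)
    filter_upwards [(tendsto_order.1 hη).2 (a / 2) (by positivity), eventually_gt_atTop 0]
      with τ hητ hτ
    have hLip : infDist (τ • ξ) U ≤ infDist (τ • η) U + τ * dist ξ η := by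
      calc infDist (τ • ξ) U ≤ infDist (τ • η) U + dist (τ • ξ) (τ • η) :=
            infDist_le_infDist_add_dist
        _ = infDist (τ • η) U + τ * dist ξ η := by
            rw [dist_smul₀, Real.norm_of_nonneg hτ.le]
    calc infDist (τ • ξ) U / τ ≤ infDist (τ • η) U / τ + dist ξ η := by
          rw [div_add' _ _ _ hτ.ne']
          gcongr
          linarith
      _ < a / 2 + a / 2 := add_lt_add hητ hξη
      _ = a := add_halves a

section UnitVectors

variable {E : Type*} [NormedAddCommGroup E] [InnerProductSpace ℝ E] {e ξ : E}

lemma dist_smul_sq_of_norm_eq_one (he : ‖e‖ = 1) (hξ : ‖ξ‖ = 1) (τ : ℝ) :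
    dist e (τ • ξ) ^ 2 = 1 - 2 * τ * ⟪ξ, e⟫ + τ ^ 2 := by
  rw [dist_eq_norm, norm_sub_sq_real, he, norm_smul, hξ, real_inner_smul_right,
    real_inner_comm, Real.norm_eq_abs, mul_one, sq_abs]
  ring

lemma sqrt_one_sub_posPart_inner_sq_le_dist (he : ‖e‖ = 1) (hξ : ‖ξ‖ = 1) {τ : ℝ}
    (hτ : 0 ≤ τ) : √(1 - ⟪ξ, e⟫⁺ ^ 2) ≤ dist e (τ • ξ) := by
  rw [← Real.sqrt_sq dist_nonneg, dist_smul_sq_of_norm_eq_one he hξ]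
  apply Real.sqrt_le_sqrt
  nlinarith [le_posPart ⟪ξ, e⟫, sq_nonneg (τ - ⟪ξ, e⟫⁺)]

lemma sqrt_one_sub_posPart_inner_sq_pos (he : ‖e‖ = 1) (hξ : ‖ξ‖ = 1) (hne : ξ ≠ e) :
    0 < √(1 - ⟪ξ, e⟫⁺ ^ 2) := by
  have hle : ⟪ξ, e⟫ ≤ 1 := by simpa [hξ, he] using real_inner_le_norm ξ e
  have hne_one : ⟪ξ, e⟫ ≠ 1 := fun h => hne ((inner_eq_one_iff_of_norm_eq_one hξ he).1 h)
  have hlt : ⟪ξ, e⟫⁺ < 1 := sup_lt_iff.2 ⟨hle.lt_of_ne hne_one, zero_lt_one⟩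
  exact Real.sqrt_pos.2 (by nlinarith [posPart_nonneg ⟪ξ, e⟫])

variable {S : Set E}

lemma infDist_Ioi_smul_le (he : ‖e‖ = 1) (hξ : ‖ξ‖ = 1) (hξS : ξ ∈ S) :
    infDist e (Set.Ioi (0 : ℝ) • S) ≤ √(1 - ⟪ξ, e⟫⁺ ^ 2) := by
  rcases lt_or_ge 0 ⟪ξ, e⟫ with hpos | hnonpos
  · have hmem : ⟪ξ, e⟫ • ξ ∈ Set.Ioi (0 : ℝ) • S := Set.smul_mem_smul hpos hξS
    refine (infDist_le_dist_of_mem hmem).trans_eq ?_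
    rw [posPart_of_nonneg hpos.le, ← Real.sqrt_sq dist_nonneg,
      dist_smul_sq_of_norm_eq_one he hξ]
    ring_nf
  · rw [posPart_of_nonpos hnonpos]
    refine le_of_forall_pos_le_add fun δ hδ => ?_
    calc infDist e (Set.Ioi (0 : ℝ) • S) ≤ dist e (δ • ξ) :=
          infDist_le_dist_of_mem (Set.smul_mem_smul hδ hξS)
      _ ≤ ‖e‖ + ‖δ • ξ‖ := dist_le_norm_add_norm e (δ • ξ)
      _ = √(1 - 0 ^ 2) + δ := by
          simp [he, norm_smul, hξ, abs_of_pos hδ]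

lemma infDist_Ioi_smul_eq_of_isMaxOn (he : ‖e‖ = 1) (hS : S ⊆ sphere 0 1) {ξ₀ : E}
    (hξ₀ : ξ₀ ∈ S) (hmax : IsMaxOn (fun ξ => ⟪ξ, e⟫⁺) S ξ₀) :
    infDist e (Set.Ioi (0 : ℝ) • S) = √(1 - ⟪ξ₀, e⟫⁺ ^ 2) := by
  refine le_antisymm (infDist_Ioi_smul_le he (by simpa using hS hξ₀) hξ₀) ?_
  refine (le_infDist ⟨(1 : ℝ) • ξ₀, Set.smul_mem_smul one_pos hξ₀⟩).2 ?_
  rintro _ ⟨τ, hτ, ξ, hξ, rfl⟩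
  calc √(1 - ⟪ξ₀, e⟫⁺ ^ 2) ≤ √(1 - ⟪ξ, e⟫⁺ ^ 2) := by
        gcongr
        exact hmax hξ
    _ ≤ dist e (τ • ξ) := sqrt_one_sub_posPart_inner_sq_le_dist he (by simpa using hS hξ)
      (le_of_lt hτ)

end UnitVectors

-- In `ℝ≥0∞` we have `0⁻¹ = ⊤`, so division there realizes the convention `c / 0 = +∞`.
lemma ite_eq_coe_ofReal_div_ofReal {c d : ℝ} (hc : 0 < c) (hd : 0 ≤ d) :
    (if d = 0 then (⊤ : EReal) else ((c / d : ℝ) : EReal)) =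
      ((ENNReal.ofReal c / ENNReal.ofReal d : ℝ≥0∞) : EReal) := by
  split_ifs with h
  · simp [h, ENNReal.div_zero (ENNReal.ofReal_pos.2 hc).ne']
  · rw [← ENNReal.ofReal_div_of_pos (hd.lt_of_ne' h), EReal.coe_ennreal_ofReal,
      max_eq_left (div_nonneg hc.le hd)]

lemma continuous_ite_div {X : Type*} [TopologicalSpace X] {f : X → ℝ} (hf : Continuous f)
    (hf0 : ∀ x, 0 ≤ f x) {c : ℝ} (hc : 0 < c) :
    Continuous fun x => if f x = 0 then (⊤ : EReal) else ((c / f x : ℝ) : EReal) := by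
  simp_rw [ite_eq_coe_ofReal_div_ofReal hc (hf0 _), div_eq_mul_inv]
  exact continuous_coe_ennreal_ereal.comp <|
    (ENNReal.continuous_const_mul ENNReal.ofReal_ne_top).comp <|
      continuous_inv.comp <| ENNReal.continuous_ofReal.comp hf

section UnbDirs

variable {N : ℕ} {U : Set (EuclideanSpace ℝ (Fin N))}

lemma unbDirs_eq_sphere_inter :
    unbDirs N U = sphere 0 1 ∩
      {ξ | Tendsto (fun τ : ℝ => infDist (τ • ξ) U / τ) atTop (𝓝 0)} := by
  ext ξ
  simp [unbDirs]

lemma isCompact_unbDirs : IsCompact (unbDirs N U) := by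
  rw [unbDirs_eq_sphere_inter]
  exact (isCompact_sphere 0 1).inter_right (isClosed_setOf_tendsto_infDist_smul_div U)

lemma posCone_eq_Ioi_smul_unbDirs : posCone N U = Set.Ioi (0 : ℝ) • unbDirs N U := by
  ext x
  simp [posCone, Set.mem_smul, eq_comm]

end UnbDirs

section Wspeed

variable {N : ℕ} {cs : ℝ} {U : Set (EuclideanSpace ℝ (Fin N))}
  {e ξ₀ : EuclideanSpace ℝ (Fin N)}

lemma wspeed_eq_div_sqrt_of_isMaxOn (hcs : 0 ≤ cs) (he : ‖e‖ = 1) (heU : e ∉ unbDirs N U)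
    (hξ₀ : ξ₀ ∈ unbDirs N U) (hmax : IsMaxOn (fun ξ => ⟪ξ, e⟫⁺) (unbDirs N U) ξ₀) :
    wspeed N cs U e = ((cs / √(1 - ⟪ξ₀, e⟫⁺ ^ 2) : ℝ) : EReal) := by
  have hpos := sqrt_one_sub_posPart_inner_sq_pos he hξ₀.1 (ne_of_mem_of_not_mem hξ₀ heU)
  rw [wspeed, if_neg heU]
  split_ifs with hex
  · refine IsGreatest.csSup_eq ⟨?_, ?_⟩
    · obtain ⟨ξ, hξ, hξe, hξ_eq⟩ :
          ∃ ξ ∈ unbDirs N U, 0 ≤ ⟪ξ, e⟫ ∧ ⟪ξ, e⟫ = ⟪ξ₀, e⟫⁺ := by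
        rcases le_total 0 ⟪ξ₀, e⟫ with h | h
        · exact ⟨ξ₀, hξ₀, h, (posPart_of_nonneg h).symm⟩
        · obtain ⟨ξ, hξ, hξe⟩ := hex
          refine ⟨ξ, hξ, hξe, ?_⟩
          rw [posPart_of_nonpos h]
          exact le_antisymm (((le_posPart _).trans (hmax hξ)).trans_eq (posPart_of_nonpos h)) hξe
      exact ⟨ξ, hξ, hξe, by rw [hξ_eq]⟩
    · rintro _ ⟨ξ, hξ, hξe, rfl⟩
      have hξ_le : ⟪ξ, e⟫ ≤ ⟪ξ₀, e⟫⁺ := (le_posPart _).trans (hmax hξ)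
      rw [EReal.coe_le_coe_iff]
      gcongr
  · push Not at hex
    simp [posPart_of_nonpos (hex ξ₀ hξ₀).le]

lemma wspeed_eq_ite_infDist_posCone (hcs : 0 ≤ cs) (hne : (unbDirs N U).Nonempty)
    (he : ‖e‖ = 1) :
    wspeed N cs U e =
      if infDist e (posCone N U) = 0 then (⊤ : EReal)
      else ((cs / infDist e (posCone N U) : ℝ) : EReal) := by
  by_cases heU : e ∈ unbDirs N U
  · have hcone : e ∈ posCone N U := ⟨1, one_pos, e, heU, (one_smul ℝ e).symm⟩
    rw [wspeed, if_pos heU, if_pos (infDist_zero_of_mem hcone)]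
  obtain ⟨ξ₀, hξ₀, hmax⟩ := isCompact_unbDirs.exists_isMaxOn hne
    (continuous_posPart.comp (continuous_id.inner continuous_const) :
      Continuous fun ξ : EuclideanSpace ℝ (Fin N) => ⟪ξ, e⟫⁺).continuousOn
  have hdist : infDist e (posCone N U) = √(1 - ⟪ξ₀, e⟫⁺ ^ 2) := by
    rw [posCone_eq_Ioi_smul_unbDirs]
    exact infDist_Ioi_smul_eq_of_isMaxOn he (fun ξ hξ => by simpa using hξ.1) hξ₀ hmax
  have hpos := sqrt_one_sub_posPart_inner_sq_pos he hξ₀.1 (ne_of_mem_of_not_mem hξ₀ heU)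
  rw [hdist, if_neg hpos.ne', wspeed_eq_div_sqrt_of_isMaxOn hcs he heU hξ₀ hmax]

end Wspeed

theorem wspeed_eq_div_dist_and_continuous_general (N : ℕ) (cs : ℝ) (hcs : 0 < cs)
    (U : Set (EuclideanSpace ℝ (Fin N))) (hne : (unbDirs N U).Nonempty) :
    (∀ e : EuclideanSpace ℝ (Fin N), ‖e‖ = 1 →
      wspeed N cs U e =
        if Metric.infDist e (posCone N U) = 0 then (⊤ : EReal)
        else ((cs / Metric.infDist e (posCone N U) : ℝ) : EReal)) ∧
    Continuous (fun e : Metric.sphere (0 : EuclideanSpace ℝ (Fin N)) 1 =>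
      wspeed N cs U (e : EuclideanSpace ℝ (Fin N))) := by
  have hformula := fun e (he : ‖e‖ = 1) => wspeed_eq_ite_infDist_posCone hcs.le hne he
  refine ⟨hformula, ?_⟩
  simp_rw [fun e : sphere (0 : EuclideanSpace ℝ (Fin N)) 1 =>
    hformula e (mem_sphere_zero_iff_norm.1 e.2)]
  exact continuous_ite_div ((continuous_infDist_pt _).comp continuous_subtype_val)
    (fun _ => infDist_nonneg) hcs

/-- if `U(U) ≠ ∅`, then for every `e ∈ S^{N-1}`,
`w(e) = c*/dist(e, ℝ⁺·U(U))` with the convention `c*/0 = +∞`; in particular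
`e ↦ w(e) ∈ [c*,+∞]` is continuous on `S^{N-1}`. -/
theorem wspeed_eq_div_dist_and_continuous (N : ℕ) (hN : 1 ≤ N) (cs : ℝ) (hcs : 0 < cs)
    (U : Set (EuclideanSpace ℝ (Fin N))) (hne : (unbDirs N U).Nonempty) :
    (∀ e : EuclideanSpace ℝ (Fin N), ‖e‖ = 1 →
      wspeed N cs U e =
        if Metric.infDist e (posCone N U) = 0 then (⊤ : EReal)
        else ((cs / Metric.infDist e (posCone N U) : ℝ) : EReal)) ∧
    Continuous (fun e : Metric.sphere (0 : EuclideanSpace ℝ (Fin N)) 1 =>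
      wspeed N cs U (e : EuclideanSpace ℝ (Fin N))) :=
  wspeed_eq_div_dist_and_continuous_general N cs hcs U hne
end

section
/- Let φ ∈ C²(ℝ) and c ∈ ℝ satisfy φ'' + cφ' + f(φ) = 0 on ℝ together with φ(−∞) = 1 > φ(z) > φ(+∞) = 0 for all z ∈ ℝ, where f ∈ C¹([0,1]) with f(0) = f(1) = 0. Then φ' < 0 on ℝ. -/
/-!
Write the equation as the first-order system `(φ, φ')' = (φ', -cφ' - f(φ))`, whose right-hand side
is Lipschitz once `f` is extended from `[0, 1]`; so a solution is determined by its phase point at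
any one time. The reflection `z ↦ 1 - φ(-z)` exchanges `c` and `-c`, so let `c ≥ 0`. Then the
energy `φ'²/2 + ∫₀^φ f` is nonincreasing. If `φ'(w) = 0` and `φ` came back to the level `φ(w)` at
a later time, the energy would force `φ' = 0` there too, and `φ` would be periodic, against its
limits. Hence after a critical point `w`, `φ` stays strictly below `φ(w)`; this rules out critical
points that are local minima, and, since `φ → 1` at `-∞`, also local maxima. A degenerate critical
point, `f(φ(w)) = 0`, makes `φ` constant. So `φ'` never vanishes, and `φ → 0` makes it negative.
-/

open Filter Topology Set

lemma Function.Periodic.eq_of_tendsto_atTop {α : Type*} [TopologicalSpace α] [T2Space α]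
    {f : ℝ → α} {T : ℝ} {a : α} (hf : Function.Periodic f T) (hT : 0 < T)
    (hlim : Tendsto f atTop (𝓝 a)) (x : ℝ) : f x = a := by
  have hseq : Tendsto (fun n : ℕ => x + n * T) atTop atTop :=
    tendsto_atTop_add_const_left _ _ (tendsto_natCast_atTop_atTop.atTop_mul_const hT)
  exact tendsto_nhds_unique (tendsto_const_nhds.congr fun n => (hf.nat_mul n x).symm)
    (hlim.comp hseq)

lemma exists_lt_left_of_deriv_deriv_neg {f : ℝ → ℝ} {x₀ : ℝ} (hf : Continuous f)
    (h1 : deriv f x₀ = 0) (h2 : deriv (deriv f) x₀ < 0) : ∃ p < x₀, f p < f x₀ := by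
  have hpos : ∀ᶠ x in 𝓝[<] x₀, deriv f x > 0 :=
    deriv_pos_left_of_sign_deriv
      (nhdsWithin_le_nhds (eventually_nhdsWithin_sign_eq_of_deriv_neg h2 h1))
  obtain ⟨l, hl : l < x₀, hsub⟩ := mem_nhdsLT_iff_exists_Ioo_subset.mp hpos
  have hmono : StrictMonoOn f (Icc l x₀) :=
    strictMonoOn_of_deriv_pos (convex_Icc l x₀) hf.continuousOn
      (by rw [interior_Icc]; exact hsub)
  exact ⟨(l + x₀) / 2, by linarith,
    hmono ⟨by linarith, by linarith⟩ ⟨hl.le, le_rfl⟩ (by linarith)⟩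

lemma deriv_neg_of_deriv_ne_zero {f : ℝ → ℝ} {a x₀ : ℝ} (hf : Differentiable ℝ f)
    (hne : ∀ x, deriv f x ≠ 0) (hlim : Tendsto f atTop (𝓝 a)) (hx₀ : a < f x₀) (x : ℝ) :
    deriv f x < 0 := by
  rcases hasDerivWithinAt_forall_lt_or_forall_gt_of_forall_ne convex_univ
    (fun x _ => (hf x).hasDerivAt.hasDerivWithinAt) (fun x _ => hne x) with hneg | hpos
  · exact hneg x trivial
  · have hmono : StrictMono f := strictMono_of_deriv_pos fun x => hpos x trivial
    linarith [hmono.monotone.ge_of_tendsto hlim x₀]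

structure IsWaveSolution (g : ℝ → ℝ) (c : ℝ) (u : ℝ → ℝ) : Prop where
  contDiff : ContDiff ℝ 2 u
  ode : ∀ t, deriv (deriv u) t + c * deriv u t + g (u t) = 0

structure IsFront (u : ℝ → ℝ) : Prop where
  tendsto_atBot : Tendsto u atBot (𝓝 1)
  tendsto_atTop : Tendsto u atTop (𝓝 0)
  mem_Ioo : ∀ t, u t ∈ Ioo 0 1

noncomputable def waveEnergy (g u : ℝ → ℝ) (t : ℝ) : ℝ :=
  deriv u t ^ 2 / 2 + ∫ x in (0 : ℝ)..u t, g x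

lemma lipschitzWith_phaseField {g : ℝ → ℝ} {K : NNReal} (hg : LipschitzWith K g) (c : ℝ) :
    ∃ L, LipschitzWith L fun x : ℝ × ℝ => (x.2, -c * x.2 - g x.1) :=
  ⟨_, LipschitzWith.prod_snd.prodMk
    (((lipschitzWith_smul (-c)).comp LipschitzWith.prod_snd).sub (hg.comp LipschitzWith.prod_fst))⟩

lemma deriv_one_sub_comp_neg (u : ℝ → ℝ) (t : ℝ) :
    deriv (fun s => 1 - u (-s)) t = deriv u (-t) := by
  rw [deriv_const_sub (f := fun s => u (-s)), deriv_comp_neg, neg_neg]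

lemma IsFront.reflect {u : ℝ → ℝ} (hu : IsFront u) : IsFront fun t => 1 - u (-t) where
  tendsto_atBot := by
    simpa using (hu.tendsto_atTop.comp tendsto_neg_atBot_atTop).const_sub 1
  tendsto_atTop := by
    simpa using (hu.tendsto_atBot.comp tendsto_neg_atTop_atBot).const_sub 1
  mem_Ioo t := ⟨sub_pos.2 (hu.mem_Ioo (-t)).2, sub_lt_self 1 (hu.mem_Ioo (-t)).1⟩

lemma isWaveSolution_const {g : ℝ → ℝ} {a : ℝ} (c : ℝ) (ha : g a = 0) :
    IsWaveSolution g c fun _ => a :=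
  ⟨contDiff_const, fun _ => by simp [ha]⟩

namespace IsWaveSolution

variable {g : ℝ → ℝ} {c : ℝ} {u v : ℝ → ℝ} {K : NNReal}

lemma differentiable (h : IsWaveSolution g c u) : Differentiable ℝ u :=
  h.contDiff.differentiable two_ne_zero

lemma continuous (h : IsWaveSolution g c u) : Continuous u :=
  h.differentiable.continuous

lemma differentiable_deriv (h : IsWaveSolution g c u) : Differentiable ℝ (deriv u) :=
  h.contDiff.differentiable_deriv_two

lemma hasDerivAt_phase (h : IsWaveSolution g c u) (t : ℝ) :
    HasDerivAt (fun s => (u s, deriv u s)) (deriv u t, -c * deriv u t - g (u t)) t := by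
  have h2 : deriv (deriv u) t = -c * deriv u t - g (u t) := by linarith [h.ode t]
  exact (h.differentiable t).hasDerivAt.prodMk (h2 ▸ (h.differentiable_deriv t).hasDerivAt)

lemma comp_add_const (h : IsWaveSolution g c u) (T : ℝ) :
    IsWaveSolution g c fun t => u (t + T) := by
  have hd : deriv (fun t => u (t + T)) = fun t => deriv u (t + T) :=
    funext fun t => deriv_comp_add_const ..
  refine ⟨h.contDiff.comp (contDiff_id.add contDiff_const), fun t => ?_⟩
  rw [hd, deriv_comp_add_const]
  exact h.ode (t + T)

lemma reflect (h : IsWaveSolution g c u) :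
    IsWaveSolution (fun x => -g (1 - x)) (-c) fun t => 1 - u (-t) := by
  have hd : deriv (fun t => 1 - u (-t)) = fun t => deriv u (-t) :=
    funext (deriv_one_sub_comp_neg u)
  refine ⟨contDiff_const.sub (h.contDiff.comp contDiff_neg), fun t => ?_⟩
  rw [hd, deriv_comp_neg, sub_sub_cancel]
  linarith [h.ode (-t)]

lemma eq_of_eq_of_deriv_eq (hg : LipschitzWith K g) (hu : IsWaveSolution g c u)
    (hv : IsWaveSolution g c v) {t₀ : ℝ} (h0 : u t₀ = v t₀) (h1 : deriv u t₀ = deriv v t₀) :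
    u = v := by
  obtain ⟨L, hL⟩ := lipschitzWith_phaseField hg c
  have hphase := ODE_solution_unique_univ (s := fun _ => univ) (fun _ => hL.lipschitzOnWith)
    (fun t => ⟨hu.hasDerivAt_phase t, trivial⟩) (fun t => ⟨hv.hasDerivAt_phase t, trivial⟩)
    (Prod.ext h0 h1)
  exact funext fun t => congrArg Prod.fst (congrFun hphase t)

lemma periodic (hg : LipschitzWith K g) (h : IsWaveSolution g c u) {t T : ℝ}
    (h0 : u (t + T) = u t) (h1 : deriv u (t + T) = deriv u t) : Function.Periodic u T :=
  congrFun (eq_of_eq_of_deriv_eq hg (h.comp_add_const T) h h0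
    (by rw [deriv_comp_add_const, h1]))

lemma hasDerivAt_waveEnergy (hg : Continuous g) (h : IsWaveSolution g c u) (t : ℝ) :
    HasDerivAt (waveEnergy g u) (-c * deriv u t ^ 2) t := by
  have hkin := ((h.differentiable_deriv t).hasDerivAt.pow 2).div_const 2
  have hpot := (hg.integral_hasStrictDerivAt 0 (u t)).hasDerivAt.comp t
    (h.differentiable t).hasDerivAt
  refine (hkin.add hpot).congr_deriv ?_
  simp only [Nat.cast_ofNat, Nat.add_one_sub_one, pow_one]
  linear_combination deriv u t * h.ode t

lemma waveEnergy_antitone (hg : Continuous g) (h : IsWaveSolution g c u) (hc : 0 ≤ c) :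
    Antitone (waveEnergy g u) :=
  antitone_of_deriv_nonpos (fun t => (h.hasDerivAt_waveEnergy hg t).differentiableAt)
    fun t => by rw [(h.hasDerivAt_waveEnergy hg t).deriv]; nlinarith [sq_nonneg (deriv u t)]

lemma deriv_eq_zero_of_eq (hg : Continuous g) (h : IsWaveSolution g c u) (hc : 0 ≤ c)
    {w z : ℝ} (hw : deriv u w = 0) (hwz : w ≤ z) (hz : u z = u w) : deriv u z = 0 := by
  have hE := h.waveEnergy_antitone hg hc hwz
  simp only [waveEnergy, hw, hz] at hE
  nlinarith [sq_nonneg (deriv u z)]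

lemma lt_of_deriv_eq_zero (hg : LipschitzWith K g) (h : IsWaveSolution g c u) (hc : 0 ≤ c)
    (hu : IsFront u) {w z : ℝ} (hw : deriv u w = 0) (hwz : w < z) : u z < u w := by
  have hne : ∀ s, w < s → u s ≠ u w := by
    intro s hs hsw
    have hT : Function.Periodic u (s - w) :=
      h.periodic hg (t := w) (by rwa [add_sub_cancel])
        (by rw [add_sub_cancel, h.deriv_eq_zero_of_eq hg.continuous hc hw hs.le hsw, hw])
    exact (hu.mem_Ioo w).1.ne' (hT.eq_of_tendsto_atTop (sub_pos.2 hs) hu.tendsto_atTop w)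
  refine lt_of_le_of_ne (not_lt.1 fun hlt => ?_) (hne z hwz)
  obtain ⟨Z, hZ, hzZ⟩ := ((hu.tendsto_atTop.eventually_lt_const (hu.mem_Ioo w).1).and
    (eventually_gt_atTop z)).exists
  obtain ⟨s, hs, hsw⟩ := intermediate_value_Icc' hzZ.le h.continuous.continuousOn
    ⟨hZ.le, hlt.le⟩
  exact hne s (hwz.trans_le hs.1) hsw

lemma le_of_deriv_eq_zero_of_lt (hg : LipschitzWith K g) (h : IsWaveSolution g c u)
    (hc : 0 ≤ c) (hu : IsFront u) {z₀ p : ℝ} (hz₀ : deriv u z₀ = 0) (hp : p < z₀) :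
    u z₀ ≤ u p := by
  by_contra! hlt
  obtain ⟨z', hz', hz'p⟩ := ((hu.tendsto_atBot.eventually_const_lt (hu.mem_Ioo z₀).2).and
    (eventually_lt_atBot p)).exists
  obtain ⟨w, hw, hmin⟩ := isCompact_Icc.exists_isMinOn (nonempty_Icc.2 (hz'p.trans hp).le)
    h.continuous.continuousOn
  have hwp : u w ≤ u p := hmin ⟨hz'p.le, hp.le⟩
  have hw' : w ∈ Ioo z' z₀ := ⟨lt_of_le_of_ne hw.1 (by rintro rfl; linarith),
    lt_of_le_of_ne hw.2 (by rintro rfl; linarith)⟩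
  have hcrit : deriv u w = 0 := (hmin.isLocalMin (Icc_mem_nhds hw'.1 hw'.2)).deriv_eq_zero
  linarith [lt_of_deriv_eq_zero hg h hc hu hcrit hw'.2]

lemma deriv_ne_zero (hg : LipschitzWith K g) (h : IsWaveSolution g c u) (hc : 0 ≤ c)
    (hu : IsFront u) (z₀ : ℝ) : deriv u z₀ ≠ 0 := by
  intro hz₀
  have hdd : deriv (deriv u) z₀ = -g (u z₀) := by
    have := h.ode z₀
    rw [hz₀, mul_zero] at this
    linarith
  rcases lt_trichotomy (g (u z₀)) 0 with hneg | hzero | hpos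
  · have hmin := isLocalMin_of_deriv_deriv_pos (by linarith) hz₀ h.continuous.continuousAt
    have hright : ∀ᶠ z in 𝓝[>] z₀, u z₀ ≤ u z := hmin.filter_mono nhdsWithin_le_nhds
    obtain ⟨z, hz, hzz⟩ := (hright.and self_mem_nhdsWithin).exists
    linarith [lt_of_deriv_eq_zero hg h hc hu hz₀ hzz]
  · have hconst := h.eq_of_eq_of_deriv_eq hg (isWaveSolution_const c hzero) (t₀ := z₀) rfl
      (by simp [hz₀])
    have hnext := lt_of_deriv_eq_zero hg h hc hu hz₀ (lt_add_one z₀)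
    rw [hconst] at hnext
    exact lt_irrefl _ hnext
  · obtain ⟨p, hp, hpz⟩ := exists_lt_left_of_deriv_deriv_neg h.continuous hz₀ (by linarith)
    linarith [le_of_deriv_eq_zero_of_lt hg h hc hu hz₀ hp]

lemma deriv_neg_of_nonneg (hg : LipschitzWith K g) (h : IsWaveSolution g c u) (hc : 0 ≤ c)
    (hu : IsFront u) (z : ℝ) : deriv u z < 0 :=
  deriv_neg_of_deriv_ne_zero h.differentiable (h.deriv_ne_zero hg hc hu) hu.tendsto_atTop
    (hu.mem_Ioo 0).1 z

lemma deriv_neg (hg : LipschitzWith K g) (h : IsWaveSolution g c u) (hu : IsFront u) (z : ℝ) :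
    deriv u z < 0 := by
  rcases le_total 0 c with hc | hc
  · exact h.deriv_neg_of_nonneg hg hc hu z
  · have hg' : LipschitzWith _ fun x => -g (1 - x) :=
      (hg.comp ((LipschitzWith.const 1).sub LipschitzWith.id)).neg
    have := h.reflect.deriv_neg_of_nonneg hg' (neg_nonneg.2 hc) hu.reflect (-z)
    rwa [deriv_one_sub_comp_neg, neg_neg] at this

end IsWaveSolution

theorem front_profile_deriv_neg_general (f : ℝ → ℝ) (hf : ContDiffOn ℝ 1 f (Set.Icc 0 1))
    (c : ℝ) (φ : ℝ → ℝ) (hφ : ContDiff ℝ 2 φ)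
    (heq : ∀ z : ℝ, deriv (deriv φ) z + c * deriv φ z + f (φ z) = 0)
    (hlim1 : Filter.Tendsto φ Filter.atBot (nhds 1))
    (hlim0 : Filter.Tendsto φ Filter.atTop (nhds 0))
    (hrange : ∀ z : ℝ, 0 < φ z ∧ φ z < 1) :
    ∀ z : ℝ, deriv φ z < 0 := by
  obtain ⟨K, hK⟩ := hf.exists_lipschitzOnWith one_ne_zero (convex_Icc 0 1) isCompact_Icc
  obtain ⟨g, hg, hfg⟩ := hK.extend_real
  have hsol : IsWaveSolution g c φ :=
    ⟨hφ, fun z => by rw [← hfg (Ioo_subset_Icc_self (hrange z))]; exact heq z⟩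
  exact hsol.deriv_neg hg ⟨hlim1, hlim0, hrange⟩

/-- a traveling-front profile `φ` (a `C²` solution of
`φ'' + cφ' + f(φ) = 0` with `φ(−∞) = 1 > φ > φ(+∞) = 0`) is strictly decreasing:
`φ' < 0` on `ℝ`. -/
theorem front_profile_deriv_neg (f : ℝ → ℝ) (hf : ContDiffOn ℝ 1 f (Set.Icc 0 1))
    (hf0 : f 0 = 0) (hf1 : f 1 = 0) (c : ℝ) (φ : ℝ → ℝ) (hφ : ContDiff ℝ 2 φ)
    (heq : ∀ z : ℝ, deriv (deriv φ) z + c * deriv φ z + f (φ z) = 0)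
    (hlim1 : Filter.Tendsto φ Filter.atBot (nhds 1))
    (hlim0 : Filter.Tendsto φ Filter.atTop (nhds 0))
    (hrange : ∀ z : ℝ, 0 < φ z ∧ φ z < 1) :
    ∀ z : ℝ, deriv φ z < 0 :=
  front_profile_deriv_neg_general f hf c φ hφ heq hlim1 hlim0 hrange
end

section
/- Let φ ∈ C²(ℝ) and c ∈ ℝ satisfy φ'' + cφ' + f(φ) = 0 on ℝ together with φ(−∞) = 1 > φ(z) > φ(+∞) = 0 for all z ∈ ℝ, where f ∈ C¹([0,1]) with f(0) = f(1) = 0. Then c > 0 if and only if ∫₀¹ f(s) ds > 0. -/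
/-!
Multiplying the profile equation by `φ'` shows that the energy `E = φ'² / 2 + F(φ)`, with
`F(u) = ∫₀ᵘ f`, satisfies `E' = -c φ'²`. Along sequences `aₙ → -∞`, `bₙ → +∞` on which `φ'`
vanishes in the limit (mean value theorem), `E(aₙ) → F(1)` and `E(bₙ) → F(0) = 0`, so
`c ∫_{aₙ}^{bₙ} φ'² → ∫₀¹ f`. Since `φ` is not constant, the integrals `∫_{aₙ}^{bₙ} φ'²` stay
bounded below by a positive constant, which forces `c` and `∫₀¹ f` to have the same sign.
-/

open Filter Topology Set intervalIntegral

lemma exists_seq_tendsto_atTop_deriv_tendsto_zero {φ : ℝ → ℝ} {L : ℝ}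
    (hφ : Differentiable ℝ φ) (hlim : Tendsto φ atTop (𝓝 L)) :
    ∃ b : ℕ → ℝ, Tendsto b atTop atTop ∧ Tendsto (fun n => deriv φ (b n)) atTop (𝓝 0) := by
  choose b hb hslope using fun n : ℕ =>
    exists_deriv_eq_slope φ (lt_add_one (n : ℝ)) hφ.continuous.continuousOn hφ.differentiableOn
  refine ⟨b, tendsto_atTop_mono (fun n => (hb n).1.le) tendsto_natCast_atTop_atTop, ?_⟩
  have hdiff : Tendsto (fun n : ℕ => φ (n + 1) - φ n) atTop (𝓝 (L - L)) :=
    (hlim.comp (tendsto_atTop_add_const_right _ 1 tendsto_natCast_atTop_atTop)).sub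
      (hlim.comp tendsto_natCast_atTop_atTop)
  rw [sub_self] at hdiff
  exact hdiff.congr fun n => by simp [hslope n]

lemma exists_seq_tendsto_atBot_deriv_tendsto_zero {φ : ℝ → ℝ} {L : ℝ}
    (hφ : Differentiable ℝ φ) (hlim : Tendsto φ atBot (𝓝 L)) :
    ∃ a : ℕ → ℝ, Tendsto a atTop atBot ∧ Tendsto (fun n => deriv φ (a n)) atTop (𝓝 0) := by
  obtain ⟨b, hb, hderiv⟩ := exists_seq_tendsto_atTop_deriv_tendsto_zero (φ := fun x => φ (-x))
    (hφ.comp differentiable_neg) (hlim.comp tendsto_neg_atTop_atBot)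
  refine ⟨fun n => -b n, tendsto_neg_atTop_atBot.comp hb, ?_⟩
  simpa [deriv_comp_neg φ] using hderiv.neg

lemma exists_deriv_ne_zero_of_tendsto {φ : ℝ → ℝ} {L L' : ℝ} (hφ : Differentiable ℝ φ)
    (hbot : Tendsto φ atBot (𝓝 L)) (htop : Tendsto φ atTop (𝓝 L')) (hLL' : L ≠ L') :
    ∃ x, deriv φ x ≠ 0 := by
  by_contra! h
  have hconst : φ = fun _ => φ 0 := funext fun x => is_const_of_deriv_eq_zero hφ h x 0
  rw [hconst] at hbot htop
  exact hLL' ((tendsto_nhds_unique hbot tendsto_const_nhds).trans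
    (tendsto_nhds_unique tendsto_const_nhds htop))

lemma exists_intervalIntegral_pos_of_continuous {g : ℝ → ℝ} (hg : Continuous g) {x₀ : ℝ}
    (hx₀ : 0 < g x₀) : ∃ l u, l < u ∧ 0 < ∫ x in l..u, g x := by
  obtain ⟨l, u, ⟨hl, hu⟩, hsub⟩ := mem_nhds_iff_exists_Ioo_subset.mp
    (hg.continuousAt.preimage_mem_nhds (Ioi_mem_nhds hx₀))
  exact ⟨l, u, hl.trans hu,
    intervalIntegral_pos_of_pos_on (hg.intervalIntegrable l u) (fun x hx => hsub hx) (hl.trans hu)⟩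

lemma eventually_intervalIntegral_le_of_tendsto {g : ℝ → ℝ} (hg : Continuous g)
    (hg0 : ∀ x, 0 ≤ g x) {a b : ℕ → ℝ} (ha : Tendsto a atTop atBot) (hb : Tendsto b atTop atTop)
    {l u : ℝ} (hlu : l ≤ u) :
    ∀ᶠ n in atTop, ∫ x in l..u, g x ≤ ∫ x in a n..b n, g x := by
  filter_upwards [ha.eventually_le_atBot l, hb.eventually_ge_atTop u] with n hal hub
  exact integral_mono_interval hal hlu hub (Eventually.of_forall hg0) (hg.intervalIntegrable _ _)

lemma pos_iff_pos_of_tendsto_mul {ι : Type*} {l : Filter ι} [l.NeBot] {J : ι → ℝ}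
    {c δ I : ℝ} (hδ : 0 < δ) (hJ : ∀ᶠ n in l, δ ≤ J n)
    (h : Tendsto (fun n => c * J n) l (𝓝 I)) : 0 < c ↔ 0 < I := by
  constructor
  · intro hc
    exact (mul_pos hc hδ).trans_le (ge_of_tendsto h (hJ.mono fun n hn => by gcongr))
  · intro hI
    by_contra! hc
    have : I ≤ 0 := le_of_tendsto h (hJ.mono fun n hn =>
      mul_nonpos_of_nonpos_of_nonneg hc (hδ.le.trans hn))
    linarith

noncomputable def frontEnergy (F φ : ℝ → ℝ) (z : ℝ) : ℝ := deriv φ z ^ 2 / 2 + F (φ z)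

section Energy

variable {f F φ : ℝ → ℝ} {c : ℝ}

lemma hasDerivAt_frontEnergy (hφ : Differentiable ℝ φ) (hφ' : Differentiable ℝ (deriv φ))
    (hF : ∀ z, HasDerivAt F (f (φ z)) (φ z))
    (heq : ∀ z, deriv (deriv φ) z + c * deriv φ z + f (φ z) = 0) (z : ℝ) :
    HasDerivAt (frontEnergy F φ) (-(c * deriv φ z ^ 2)) z := by
  have hsq : HasDerivAt (fun z => deriv φ z ^ 2 / 2) (deriv φ z * deriv (deriv φ) z) z :=
    (((hφ' z).hasDerivAt.pow 2).div_const 2).congr_deriv (by push_cast; ring)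
  refine (hsq.add ((hF z).comp z (hφ z).hasDerivAt)).congr_deriv ?_
  linear_combination deriv φ z * heq z

lemma mul_integral_deriv_sq_eq_frontEnergy_sub (hφ : Differentiable ℝ φ)
    (hφ' : Differentiable ℝ (deriv φ)) (hF : ∀ z, HasDerivAt F (f (φ z)) (φ z))
    (heq : ∀ z, deriv (deriv φ) z + c * deriv φ z + f (φ z) = 0) (a b : ℝ) :
    c * ∫ x in a..b, deriv φ x ^ 2 = frontEnergy F φ a - frontEnergy F φ b := by
  have hint := integral_eq_sub_of_hasDerivAt (fun x _ => hasDerivAt_frontEnergy hφ hφ' hF heq x)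
    ((continuous_const.mul (hφ'.continuous.pow 2)).neg.intervalIntegrable a b)
  rw [integral_neg, integral_const_mul] at hint
  linarith

lemma tendsto_frontEnergy {s : ℕ → ℝ} {L : ℝ} (hF : Continuous F)
    (hφ : Tendsto (fun n => φ (s n)) atTop (𝓝 L))
    (hφ' : Tendsto (fun n => deriv φ (s n)) atTop (𝓝 0)) :
    Tendsto (fun n => frontEnergy F φ (s n)) atTop (𝓝 (F L)) := by
  simpa [frontEnergy] using ((hφ'.pow 2).div_const 2).add ((hF.tendsto L).comp hφ)

end Energy

theorem speed_pos_iff_integral_pos_of_continuous {f φ : ℝ → ℝ} {c : ℝ} (hf : Continuous f)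
    (hφ : Differentiable ℝ φ) (hφ' : Differentiable ℝ (deriv φ))
    (heq : ∀ z, deriv (deriv φ) z + c * deriv φ z + f (φ z) = 0)
    (hlim1 : Tendsto φ atBot (𝓝 1)) (hlim0 : Tendsto φ atTop (𝓝 0)) :
    0 < c ↔ 0 < ∫ s in (0:ℝ)..1, f s := by
  set F : ℝ → ℝ := fun u => ∫ s in (0:ℝ)..u, f s
  have hF : Continuous F := continuous_primitive (fun _ _ => hf.intervalIntegrable _ _) 0
  have hFderiv : ∀ z, HasDerivAt F (f (φ z)) (φ z) := fun z =>
    (hf.integral_hasStrictDerivAt 0 (φ z)).hasDerivAt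
  obtain ⟨a, ha, hφ'a⟩ := exists_seq_tendsto_atBot_deriv_tendsto_zero hφ hlim1
  obtain ⟨b, hb, hφ'b⟩ := exists_seq_tendsto_atTop_deriv_tendsto_zero hφ hlim0
  have hEa := tendsto_frontEnergy hF (hlim1.comp ha) hφ'a
  have hEb := tendsto_frontEnergy hF (hlim0.comp hb) hφ'b
  have hkey : Tendsto (fun n => c * ∫ x in a n..b n, deriv φ x ^ 2) atTop (𝓝 (F 1)) := by
    simpa [F, mul_integral_deriv_sq_eq_frontEnergy_sub hφ hφ' hFderiv heq] using hEa.sub hEb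
  have hψ2 : Continuous fun x => deriv φ x ^ 2 := hφ'.continuous.pow 2
  obtain ⟨x₀, hx₀⟩ := exists_deriv_ne_zero_of_tendsto hφ hlim1 hlim0 one_ne_zero
  obtain ⟨l, u, hlu, hpos⟩ := exists_intervalIntegral_pos_of_continuous hψ2 (sq_pos_of_ne_zero hx₀)
  exact pos_iff_pos_of_tendsto_mul hpos
    (eventually_intervalIntegral_le_of_tendsto hψ2 (fun x => sq_nonneg _) ha hb hlu.le) hkey

theorem front_speed_pos_iff_integral_pos_general (f : ℝ → ℝ)
    (hf : ContDiffOn ℝ 1 f (Set.Icc 0 1))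
    (c : ℝ) (φ : ℝ → ℝ) (hφ : ContDiff ℝ 2 φ)
    (heq : ∀ z : ℝ, deriv (deriv φ) z + c * deriv φ z + f (φ z) = 0)
    (hlim1 : Filter.Tendsto φ Filter.atBot (nhds 1))
    (hlim0 : Filter.Tendsto φ Filter.atTop (nhds 0))
    (hrange : ∀ z : ℝ, 0 < φ z ∧ φ z < 1) :
    0 < c ↔ 0 < ∫ s in (0:ℝ)..1, f s := by
  -- `φ` takes values in `[0, 1]`, so `f` may be replaced by its constant extension off `[0, 1]`.
  set g : ℝ → ℝ := fun x => f (projIcc 0 1 zero_le_one x)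
  have hg : Continuous g := hf.continuousOn.comp_continuous
    (continuous_subtype_val.comp continuous_projIcc) fun x => (projIcc 0 1 zero_le_one x).2
  have hgf : EqOn g f (Icc 0 1) := fun x hx => by simp [g, projIcc_of_mem zero_le_one hx]
  have hderiv := (contDiff_succ_iff_deriv (n := 1)).mp hφ
  have heq' : ∀ z, deriv (deriv φ) z + c * deriv φ z + g (φ z) = 0 := fun z => by
    rw [hgf ⟨(hrange z).1.le, (hrange z).2.le⟩]
    exact heq z
  rw [← integral_congr (hgf.mono (uIcc_of_le zero_le_one).subset)]
  exact speed_pos_iff_integral_pos_of_continuous hg hderiv.1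
    (hderiv.2.2.differentiable one_ne_zero) heq' hlim1 hlim0

/-- for a traveling-front profile `φ` with speed `c` (a `C²` solution of
`φ'' + cφ' + f(φ) = 0` with `φ(−∞) = 1 > φ > φ(+∞) = 0`), one has
`c > 0 ↔ ∫₀¹ f(s) ds > 0`. -/
theorem front_speed_pos_iff_integral_pos (f : ℝ → ℝ)
    (hf : ContDiffOn ℝ 1 f (Set.Icc 0 1)) (hf0 : f 0 = 0) (hf1 : f 1 = 0)
    (c : ℝ) (φ : ℝ → ℝ) (hφ : ContDiff ℝ 2 φ)
    (heq : ∀ z : ℝ, deriv (deriv φ) z + c * deriv φ z + f (φ z) = 0)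
    (hlim1 : Filter.Tendsto φ Filter.atBot (nhds 1))
    (hlim0 : Filter.Tendsto φ Filter.atTop (nhds 0))
    (hrange : ∀ z : ℝ, 0 < φ z ∧ φ z < 1) :
    0 < c ↔ 0 < ∫ s in (0:ℝ)..1, f s :=
  front_speed_pos_iff_integral_pos_general f hf c φ hφ heq hlim1 hlim0 hrange
end

section
/- Suppose f ∈ C¹([0,1]), f(0) = f(1) = 0, and there exist c₀ > 0 and φ₀ ∈ C²(ℝ) solving φ₀'' + c₀φ₀' + f(φ₀) = 0 with φ₀(−∞) = 1 > φ₀ > φ₀(+∞) = 0. Then there exists θ ∈ (0,1) such that f > 0 on [θ, 1). -/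
/-!
Fix `σ ∈ (0,1)`. Since `φ₀ → 1` at `-∞` and `φ₀ → 0` at `+∞`, the function
`e^{c₀z/2} (φ₀(z) - σ)` attains a positive maximum at some `z*`; equivalently, the
supersolution `σ + A e^{-c₀z/2}` touches `φ₀` from above there. The second-derivative test at
`z*` and the front equation give `f(u) ≥ (c₀²/4)(u - σ)` at `u = φ₀(z*) ∈ (σ,1)`.

This rules out `f'(1) > 0`, for then `f < f(1) = 0` just below `1`. Hence `f' < k < c₀²/4` on
some `[θ,1]`, and if `f(s) ≤ 0` for an `s ∈ [θ,1)`, the point `u` obtained from `σ = s` would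
satisfy `f(u) < k(u - s) < (c₀²/4)(u - s)`.
-/

open Filter Topology Set

lemma IsLocalMax.deriv_deriv_nonpos {f : ℝ → ℝ} {x : ℝ} (hmax : IsLocalMax f x)
    (hc : ContinuousAt f x) : deriv (deriv f) x ≤ 0 := by
  by_contra! hpos
  have hmin : IsLocalMin f x := isLocalMin_of_deriv_deriv_pos hpos hmax.deriv_eq_zero hc
  have hconst : f =ᶠ[𝓝 x] fun _ ↦ f x := by
    filter_upwards [hmax, hmin] with y hy₁ hy₂ using le_antisymm hy₁ hy₂
  have : deriv (deriv f) x = 0 := by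
    rw [hconst.deriv.deriv_eq]
    simp
  exact hpos.ne' this

lemma deriv_exp_mul {g : ℝ → ℝ} (hg : Differentiable ℝ g) (l : ℝ) :
    deriv (fun z ↦ Real.exp (l * z) * g z) =
      fun z ↦ Real.exp (l * z) * (deriv g z + l * g z) := by
  funext z
  have hexp : HasDerivAt (fun z ↦ Real.exp (l * z)) (Real.exp (l * z) * l) z := by
    simpa using ((hasDerivAt_id z).const_mul l).exp
  refine (hexp.mul (hg z).hasDerivAt).deriv.trans ?_
  ring

lemma deriv_deriv_exp_mul {g : ℝ → ℝ} (hg : Differentiable ℝ g)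
    (hg' : Differentiable ℝ (deriv g)) (l z : ℝ) :
    deriv (deriv fun z ↦ Real.exp (l * z) * g z) z =
      Real.exp (l * z) * (deriv (deriv g) z + 2 * l * deriv g z + l ^ 2 * g z) := by
  have hd : HasDerivAt (fun y ↦ deriv g y + l * g y) (deriv (deriv g) z + l * deriv g z) z :=
    (hg' z).hasDerivAt.add ((hg z).hasDerivAt.const_mul l)
  rw [deriv_exp_mul hg, deriv_exp_mul (g := fun y ↦ deriv g y + l * g y) (hg'.add (hg.const_mul l))]
  beta_reduce
  rw [hd.deriv]
  ring

lemma exists_gt_forall_exp_mul_sub_le {φ : ℝ → ℝ} (hφ : Continuous φ) {l₀ l₁ σ l : ℝ}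
    (hlim₁ : Tendsto φ atBot (𝓝 l₁)) (hlim₀ : Tendsto φ atTop (𝓝 l₀))
    (hσ₀ : l₀ < σ) (hσ₁ : σ < l₁) (hl : 0 < l) :
    ∃ z, σ < φ z ∧ ∀ y, Real.exp (l * y) * (φ y - σ) ≤ Real.exp (l * z) * (φ z - σ) := by
  set h : ℝ → ℝ := fun y ↦ Real.exp (l * y) * (φ y - σ)
  obtain ⟨z₁, hz₁⟩ := (hlim₁.eventually_const_lt hσ₁).exists
  have hz₁pos : 0 < h z₁ := mul_pos (Real.exp_pos _) (sub_pos.2 hz₁)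
  have hbot : Tendsto h atBot (𝓝 0) := by
    have hexp : Tendsto (fun y ↦ Real.exp (l * y)) atBot (𝓝 0) :=
      Real.tendsto_exp_atBot.comp (tendsto_id.const_mul_atBot hl)
    simpa using hexp.mul (hlim₁.sub_const σ)
  have htop : ∀ᶠ y in atTop, h y ≤ 0 := by
    filter_upwards [hlim₀.eventually_lt_const hσ₀] with y hy
    exact mul_nonpos_of_nonneg_of_nonpos (Real.exp_pos _).le (by linarith)
  obtain ⟨z, hz⟩ := (by fun_prop : Continuous h).exists_forall_ge' z₁ <| by
    rw [cocompact_eq_atBot_atTop, eventually_sup]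
    exact ⟨(hbot.eventually_lt_const hz₁pos).mono fun _ ↦ le_of_lt,
      htop.mono fun _ hy ↦ hy.trans hz₁pos.le⟩
  refine ⟨z, ?_, hz⟩
  have : 0 < h z := hz₁pos.trans_le (hz z₁)
  exact sub_pos.1 (pos_of_mul_pos_right this (Real.exp_pos _).le)

lemma exists_mem_Ioo_sq_div_four_mul_sub_le_of_front {f φ : ℝ → ℝ} {c : ℝ} (hc : 0 < c)
    (hφ : ContDiff ℝ 2 φ)
    (heq : ∀ z, deriv (deriv φ) z + c * deriv φ z + f (φ z) = 0)
    (hlim₁ : Tendsto φ atBot (𝓝 1)) (hlim₀ : Tendsto φ atTop (𝓝 0)) (hlt : ∀ z, φ z < 1)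
    {σ : ℝ} (hσ₀ : 0 < σ) (hσ₁ : σ < 1) :
    ∃ u ∈ Ioo σ 1, c ^ 2 / 4 * (u - σ) ≤ f u := by
  have hφ₁ : Differentiable ℝ φ := hφ.differentiable (by norm_num)
  have hφ₂ : Differentiable ℝ (deriv φ) := (hφ.iterate_deriv' 1 1).differentiable (by norm_num)
  obtain ⟨z, hσz, hmax⟩ :=
    exists_gt_forall_exp_mul_sub_le hφ.continuous hlim₁ hlim₀ hσ₀ hσ₁ (half_pos hc)
  refine ⟨φ z, ⟨hσz, hlt z⟩, ?_⟩
  have hsecond := IsLocalMax.deriv_deriv_nonpos (Eventually.of_forall hmax)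
    (by fun_prop : Continuous fun y ↦ Real.exp (c / 2 * y) * (φ y - σ)).continuousAt
  rw [deriv_deriv_exp_mul (hφ₁.sub_const σ) (by rwa [deriv_sub_const_fun]),
    deriv_sub_const_fun] at hsecond
  have hexp := Real.exp_pos (c / 2 * z)
  nlinarith [heq z]

lemma exists_strictMonoOn_Icc_of_derivWithin_pos {g : ℝ → ℝ} {a b : ℝ} (hab : a < b)
    (hg : ContDiffOn ℝ 1 g (Icc a b)) (hpos : 0 < derivWithin g (Icc a b) b) :
    ∃ θ ∈ Ioo a b, StrictMonoOn g (Icc θ b) := by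
  have hcont : ContinuousWithinAt (derivWithin g (Icc a b)) (Icc a b) b :=
    hg.continuousOn_derivWithin (uniqueDiffOn_Icc hab) le_rfl b (right_mem_Icc.2 hab.le)
  have hev : ∀ᶠ x in 𝓝[≤] b, a < x ∧ 0 < derivWithin g (Icc a b) x := by
    have := hcont.eventually_const_lt hpos
    rw [nhdsWithin_Icc_eq_nhdsLE hab] at this
    filter_upwards [Ioc_mem_nhdsLE hab, this] with x hx hx' using ⟨hx.1, hx'⟩
  obtain ⟨θ, hθb, hsub⟩ := mem_nhdsLE_iff_exists_Icc_subset.1 hev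
  have haθ : a < θ := (hsub (left_mem_Icc.2 hθb.le)).1
  refine ⟨θ, ⟨haθ, hθb⟩, strictMonoOn_of_deriv_pos (convex_Icc θ b)
    (hg.continuousOn.mono (Icc_subset_Icc haθ.le le_rfl)) fun x hx ↦ ?_⟩
  rw [interior_Icc] at hx
  obtain ⟨hax, hx'⟩ := hsub (Ioo_subset_Icc_self hx)
  rwa [derivWithin_of_mem_nhds (Icc_mem_nhds hax hx.2)] at hx'

lemma exists_pos_Ico_of_forall_exists_le {f : ℝ → ℝ} {a b κ : ℝ} (hab : a < b)
    (hf : ContDiffOn ℝ 1 f (Icc a b)) (hfb : f b = 0) (hκ : 0 < κ)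
    (h : ∀ σ ∈ Ioo a b, ∃ u ∈ Ioo σ b, κ * (u - σ) ≤ f u) :
    ∃ θ ∈ Ioo a b, ∀ s ∈ Ico θ b, 0 < f s := by
  set μ := derivWithin f (Icc a b) b
  have hμ : μ ≤ 0 := by
    by_contra! hμ
    obtain ⟨θ, hθ, hmono⟩ := exists_strictMonoOn_Icc_of_derivWithin_pos hab hf hμ
    obtain ⟨u, hu, hfu⟩ := h θ hθ
    have : f u < f b := hmono ⟨hu.1.le, hu.2.le⟩ ⟨hθ.2.le, le_rfl⟩ hu.2
    nlinarith [hu.1]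
  obtain ⟨k, hμk, hkκ⟩ := exists_between (hμ.trans_lt hκ)
  have hbmem : b ∈ Icc a b := right_mem_Icc.2 hab.le
  have hderiv : derivWithin (fun x ↦ k * x - f x) (Icc a b) b = k - μ := by
    have : HasDerivWithinAt (fun x ↦ k * x - f x) (k * 1 - μ) (Icc a b) b :=
      ((hasDerivWithinAt_id b (Icc a b)).const_mul k).sub
        (hf.differentiableOn one_ne_zero b hbmem).hasDerivWithinAt
    rw [this.derivWithin (uniqueDiffOn_Icc hab b hbmem), mul_one]
  obtain ⟨θ, hθ, hmono⟩ := exists_strictMonoOn_Icc_of_derivWithin_pos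
    (g := fun x ↦ k * x - f x) hab ((contDiffOn_const.mul contDiffOn_id).sub hf)
    (by rw [hderiv]; linarith)
  refine ⟨θ, hθ, fun s hs ↦ ?_⟩
  by_contra! hfs
  obtain ⟨u, hu, hfu⟩ := h s ⟨hθ.1.trans_le hs.1, hs.2⟩
  have : k * s - f s < k * u - f u := hmono ⟨hs.1, hs.2.le⟩ ⟨hs.1.trans hu.1.le, hu.2.le⟩ hu.1
  nlinarith [hu.1]

theorem f_pos_near_one_of_front_general (f : ℝ → ℝ) (hf : ContDiffOn ℝ 1 f (Set.Icc 0 1))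
    (hf1 : f 1 = 0) (c₀ : ℝ) (hc₀ : 0 < c₀)
    (φ₀ : ℝ → ℝ) (hφ : ContDiff ℝ 2 φ₀)
    (heq : ∀ z : ℝ, deriv (deriv φ₀) z + c₀ * deriv φ₀ z + f (φ₀ z) = 0)
    (hlim1 : Filter.Tendsto φ₀ Filter.atBot (nhds 1))
    (hlim0 : Filter.Tendsto φ₀ Filter.atTop (nhds 0))
    (hrange : ∀ z : ℝ, 0 < φ₀ z ∧ φ₀ z < 1) :
    ∃ θ ∈ Set.Ioo (0:ℝ) 1, ∀ s ∈ Set.Ico θ 1, 0 < f s :=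
  exists_pos_Ico_of_forall_exists_le zero_lt_one hf hf1 (by positivity) fun _ hσ ↦
    exists_mem_Ioo_sq_div_four_mul_sub_le_of_front hc₀ hφ heq hlim1 hlim0
      (fun z ↦ (hrange z).2) hσ.1 hσ.2

/-- if the equation admits a traveling front connecting `1` to `0` with
positive speed `c₀`, then there exists `θ ∈ (0,1)` with `f > 0` on `[θ,1)`. -/
theorem f_pos_near_one_of_front (f : ℝ → ℝ) (hf : ContDiffOn ℝ 1 f (Set.Icc 0 1))
    (hf0 : f 0 = 0) (hf1 : f 1 = 0) (c₀ : ℝ) (hc₀ : 0 < c₀)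
    (φ₀ : ℝ → ℝ) (hφ : ContDiff ℝ 2 φ₀)
    (heq : ∀ z : ℝ, deriv (deriv φ₀) z + c₀ * deriv φ₀ z + f (φ₀ z) = 0)
    (hlim1 : Filter.Tendsto φ₀ Filter.atBot (nhds 1))
    (hlim0 : Filter.Tendsto φ₀ Filter.atTop (nhds 0))
    (hrange : ∀ z : ℝ, 0 < φ₀ z ∧ φ₀ z < 1) :
    ∃ θ ∈ Set.Ioo (0:ℝ) 1, ∀ s ∈ Set.Ico θ 1, 0 < f s :=
  f_pos_near_one_of_front_general f hf hf1 c₀ hc₀ φ₀ hφ heq hlim1 hlim0 hrange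
end
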